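/- arXiv:2405.16780 — 3 statements merged into one kernel-verified Lean document; each statement's English description precedes it below -/
import Mathlib

section
/- (Identification of the proportion of survived compliers under survival monotonicity.) Assume in addition to randomization and monotonicity that S₁ ≥ S₀ almost surely. Then the proportion of survived compliers is identified: P(cl) = E[(1−D)·S | Z=0] − E[(1−D)·S | Z=1]. -/
open MeasureTheory ProbabilityTheory

variable {Ω : Type*} [MeasurableSpace Ω]

/-- Conditional expectation of `X` given the event `A`: `E[X | A] = E[X·1_A] / P(A)`. -/
noncomputable def cexp (P : Measure Ω) (A : Set Ω) (X : Ω → ℝ) : ℝ :=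
  (∫ ω in A, X ω ∂P) / (P A).toReal

/-- Conditional probability of `B` given the event `A`: `P(B | A) = P(B ∩ A) / P(A)`. -/
noncomputable def cprob (P : Measure Ω) (A B : Set Ω) : ℝ :=
  (P (B ∩ A)).toReal / (P A).toReal

lemma cexp_eq_prob (P : Measure Ω) [IsProbabilityMeasure P]
    (A B : Set Ω) (hA : MeasurableSet A) (hB : MeasurableSet B)
    (f : Ω → ℝ) (hf : Set.EqOn f (Set.indicator B (fun _ => (1:ℝ))) A)
    (hPB : P (B ∩ A) = P B * P A) (hApos : 0 < (P A).toReal) :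
    cexp P A f = (P B).toReal := by
  unfold cexp
  rw [setIntegral_congr_fun hA hf, setIntegral_indicator hB, setIntegral_const,
    smul_eq_mul, mul_one, measureReal_def, Set.inter_comm, hPB, ENNReal.toReal_mul,
    mul_div_assoc, div_self (ne_of_gt hApos), mul_one]

/-- Under randomization, monotonicity and survival monotonicity `S₁ ≥ S₀` a.s., the proportion of survived compliers is identified: `P(cl) = E[(1−D)·S | Z=0] − E[(1−D)·S | Z=1]`. -/
theorem stmt_14
    (P : Measure Ω) [IsProbabilityMeasure P]
    (Z D0 D1 S0 S1 Y0 Y1 D S Y : Ω → ℝ)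
    (hZm : Measurable Z) (hD0m : Measurable D0) (hD1m : Measurable D1)
    (hS0m : Measurable S0) (hS1m : Measurable S1)
    (hY0i : Integrable Y0 P) (hY1i : Integrable Y1 P)
    (hZb : ∀ ω, Z ω = 0 ∨ Z ω = 1)
    (hD0b : ∀ ω, D0 ω = 0 ∨ D0 ω = 1)
    (hD1b : ∀ ω, D1 ω = 0 ∨ D1 ω = 1)
    (hS0b : ∀ ω, S0 ω = 0 ∨ S0 ω = 1)
    (hS1b : ∀ ω, S1 ω = 0 ∨ S1 ω = 1)
    (hD : ∀ ω, D ω = Z ω * D1 ω + (1 - Z ω) * D0 ω)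
    (hS : ∀ ω, S ω = D ω * S1 ω + (1 - D ω) * S0 ω)
    (hY : ∀ ω, Y ω = D ω * Y1 ω + (1 - D ω) * Y0 ω)
    (hindep : IndepFun Z (fun ω => (D0 ω, D1 ω, S0 ω, S1 ω, Y0 ω, Y1 ω)) P)
    (hZpos : 0 < (P {ω | Z ω = 1}).toReal)
    (hZlt1 : (P {ω | Z ω = 1}).toReal < 1)
    (hmono : ∀ᵐ ω ∂P, D0 ω ≤ D1 ω)
    (hsmono : ∀ᵐ ω ∂P, S0 ω ≤ S1 ω)
    :
    (P {ω | D1 ω = 1 ∧ D0 ω = 0 ∧ S1 ω = 1 ∧ S0 ω = 1}).toReal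
      = cexp P {ω | Z ω = 0} (fun ω => (1 - D ω) * S ω)
        - cexp P {ω | Z ω = 1} (fun ω => (1 - D ω) * S ω) := by
  set B0 : Set Ω := {ω | D0 ω = 0 ∧ S0 ω = 1} with hB0def
  set B1 : Set Ω := {ω | D1 ω = 0 ∧ S0 ω = 1} with hB1def
  have hB0 : MeasurableSet B0 :=
    (hD0m (measurableSet_singleton 0)).inter (hS0m (measurableSet_singleton 1))
  have hB1 : MeasurableSet B1 :=
    (hD1m (measurableSet_singleton 0)).inter (hS0m (measurableSet_singleton 1))
  have hZ0 : MeasurableSet {ω | Z ω = 0} := hZm (measurableSet_singleton 0)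
  have hZ1 : MeasurableSet {ω | Z ω = 1} := hZm (measurableSet_singleton 1)
  -- P {Z=0}
  have hZcompl : {ω | Z ω = 0} = {ω | Z ω = 1}ᶜ := by
    ext ω; simp only [Set.mem_setOf_eq, Set.mem_compl_iff]
    rcases hZb ω with h | h <;> simp [h]
  have hPZ0 : (P {ω | Z ω = 0}).toReal = 1 - (P {ω | Z ω = 1}).toReal := by
    rw [hZcompl, measure_compl hZ1 (measure_ne_top _ _), measure_univ,
      ENNReal.toReal_sub_of_le prob_le_one ENNReal.one_ne_top, ENNReal.toReal_one]
  have hZ0pos : 0 < (P {ω | Z ω = 0}).toReal := by rw [hPZ0]; linarith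
  -- independence facts
  have hind : ∀ (z : ℝ) (T : Set (ℝ × ℝ × ℝ × ℝ × ℝ × ℝ)), MeasurableSet T →
      P ((fun ω => (D0 ω, D1 ω, S0 ω, S1 ω, Y0 ω, Y1 ω)) ⁻¹' T ∩ {ω | Z ω = z})
        = P ((fun ω => (D0 ω, D1 ω, S0 ω, S1 ω, Y0 ω, Y1 ω)) ⁻¹' T) * P {ω | Z ω = z} := by
    intro z T hT
    have h := hindep.measure_inter_preimage_eq_mul {z} T (measurableSet_singleton z) hT
    have hset : Z ⁻¹' {z} = {ω | Z ω = z} := rfl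
    rw [hset] at h
    rw [Set.inter_comm, h, mul_comm]
  have hmul0 : P (B0 ∩ {ω | Z ω = 0}) = P B0 * P {ω | Z ω = 0} := by
    have hT : MeasurableSet {p : ℝ × ℝ × ℝ × ℝ × ℝ × ℝ | p.1 = 0 ∧ p.2.2.1 = 1} := by
      exact (measurable_fst (measurableSet_singleton 0)).inter
        ((measurable_fst.comp (measurable_snd.comp measurable_snd)) (measurableSet_singleton 1))
    exact hind 0 _ hT
  have hmul1 : P (B1 ∩ {ω | Z ω = 1}) = P B1 * P {ω | Z ω = 1} := by
    have hT : MeasurableSet {p : ℝ × ℝ × ℝ × ℝ × ℝ × ℝ | p.2.1 = 0 ∧ p.2.2.1 = 1} := by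
      exact ((measurable_fst.comp measurable_snd) (measurableSet_singleton 0)).inter
        ((measurable_fst.comp (measurable_snd.comp measurable_snd)) (measurableSet_singleton 1))
    exact hind 1 _ hT
  -- pointwise identities
  have hf0 : Set.EqOn (fun ω => (1 - D ω) * S ω)
      (Set.indicator B0 (fun _ => (1:ℝ))) {ω | Z ω = 0} := by
    intro ω hω
    have hz : Z ω = 0 := hω
    have hDω : D ω = D0 ω := by rw [hD ω, hz]; ring
    simp only [hS ω, hDω, Set.indicator, hB0def, Set.mem_setOf_eq]
    rcases hD0b ω with h | h <;> rcases hS0b ω with h' | h' <;> simp [h, h'] <;> norm_num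
  have hf1 : Set.EqOn (fun ω => (1 - D ω) * S ω)
      (Set.indicator B1 (fun _ => (1:ℝ))) {ω | Z ω = 1} := by
    intro ω hω
    have hz : Z ω = 1 := hω
    have hDω : D ω = D1 ω := by rw [hD ω, hz]; ring
    simp only [hS ω, hDω, Set.indicator, hB1def, Set.mem_setOf_eq]
    rcases hD1b ω with h | h <;> rcases hS0b ω with h' | h' <;> simp [h, h'] <;> norm_num
  have hc0 := cexp_eq_prob P _ B0 hZ0 hB0 _ hf0 hmul0 hZ0pos
  have hc1 := cexp_eq_prob P _ B1 hZ1 hB1 _ hf1 hmul1 hZpos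
  rw [hc0, hc1]
  -- measure arithmetic
  set C : Set Ω := {ω | D1 ω = 1 ∧ D0 ω = 0 ∧ S1 ω = 1 ∧ S0 ω = 1} with hCdef
  have h1 : (B0 ∩ B1 : Set Ω) =ᵐ[P] B1 := by
    rw [Filter.eventuallyEq_set]
    filter_upwards [hmono] with ω hm
    simp only [Set.mem_inter_iff, hB0def, hB1def, Set.mem_setOf_eq]
    constructor
    · tauto
    · rintro ⟨h1, h2⟩
      have : D0 ω = 0 := by
        rcases hD0b ω with h | h
        · exact h
        · exfalso; rw [h, h1] at hm; linarith
      tauto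
  have h2 : (B0 \ B1 : Set Ω) =ᵐ[P] C := by
    rw [Filter.eventuallyEq_set]
    filter_upwards [hmono, hsmono] with ω hm hs
    simp only [Set.mem_diff, hB0def, hB1def, hCdef, Set.mem_setOf_eq]
    constructor
    · rintro ⟨⟨hd0, hs0⟩, hnot⟩
      have hd1 : D1 ω = 1 := by
        rcases hD1b ω with h | h
        · exact absurd ⟨h, hs0⟩ hnot
        · exact h
      have hs1 : S1 ω = 1 := by
        rcases hS1b ω with h | h
        · exfalso; rw [h, hs0] at hs; linarith
        · exact h
      exact ⟨hd1, hd0, hs1, hs0⟩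
    · rintro ⟨hd1, hd0, hs1, hs0⟩
      refine ⟨⟨hd0, hs0⟩, fun hc => ?_⟩
      rw [hc.1] at hd1; norm_num at hd1
  have hsplit : P B0 = P B1 + P C := by
    rw [← measure_congr h1, ← measure_congr h2, measure_inter_add_diff B0 hB1]
  have hfin : ∀ s : Set Ω, P s ≠ ⊤ := fun s => measure_ne_top P s
  have : (P B0).toReal = (P B1).toReal + (P C).toReal := by
    rw [hsplit, ENNReal.toReal_add (hfin _) (hfin _)]
  linarith
end

section
/- (Theorem 1 with missing data, treated-arm part.) Assume randomization, monotonicity, relevance and principal ignorability with P(cl) > 0, P(cp) > 0, P(ch) > 0 and P(c ∩ {S₁=1}) > 0, and assume the missingness-at-random conditions hold in the cells (z,d) = (1,1) and (0,1), with P(Z=z, D=1, Δ_S=1) > 0 and P(Z=z, D=1, S=1, Δ_Y=1) > 0 for z = 0, 1. Then E[Y₁ | cl] is identified from the observed (non-missing) data by: E[Y₁ | cl] = [ P(D=1 | Z=1)·E[S | Z=1, D=1, Δ_S=1]·E[Y | Z=1, D=1, S=1, Δ_Y=1] − P(D=1 | Z=0)·E[S | Z=0, D=1, Δ_S=1]·E[Y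 | Z=0, D=1, S=1, Δ_Y=1] ] / [ P(D=1 | Z=1)·E[S | Z=1, D=1, Δ_S=1] − P(D=1 | Z=0)·E[S | Z=0, D=1, Δ_S=1] ], and the denominator is strictly positive. -/
open MeasureTheory ProbabilityTheory

variable {Ω : Type*} [MeasurableSpace Ω]

lemma toReal_mono_pos (P : Measure Ω) [IsProbabilityMeasure P] {A B : Set Ω}
    (hAB : A ⊆ B) (h : 0 < (P A).toReal) : 0 < (P B).toReal :=
  lt_of_lt_of_le h (ENNReal.toReal_mono (measure_ne_top P B) (measure_mono hAB))

lemma setIntegral_of_binary (P : Measure Ω) [IsProbabilityMeasure P] {X : Ω → ℝ}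
    (hXm : Measurable X) (hXb : ∀ ω, X ω = 0 ∨ X ω = 1) (A : Set Ω) :
    ∫ ω in A, X ω ∂P = (P ({ω | X ω = 1} ∩ A)).toReal := by
  have hset : MeasurableSet {ω | X ω = 1} := hXm (measurableSet_singleton 1)
  have hX : (fun ω => X ω) = Set.indicator {ω | X ω = 1} (fun _ => (1 : ℝ)) := by
    funext ω
    rcases hXb ω with h | h <;> simp [Set.indicator_apply, Set.mem_setOf_eq, h]
  rw [hX, setIntegral_indicator hset, setIntegral_const, smul_eq_mul, mul_one, Set.inter_comm]
  rfl

lemma setIntegral_mul_binary (P : Measure Ω) [IsProbabilityMeasure P] {X Δ : Ω → ℝ}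
    (hΔm : Measurable Δ) (hΔb : ∀ ω, Δ ω = 0 ∨ Δ ω = 1) (A : Set Ω) :
    ∫ ω in A, X ω * Δ ω ∂P = ∫ ω in {ω | Δ ω = 1} ∩ A, X ω ∂P := by
  have hset : MeasurableSet {ω | Δ ω = 1} := hΔm (measurableSet_singleton 1)
  have hX : (fun ω => X ω * Δ ω) = Set.indicator {ω | Δ ω = 1} X := by
    funext ω
    rcases hΔb ω with h | h <;> simp [Set.indicator_apply, Set.mem_setOf_eq, h]
  rw [hX, setIntegral_indicator hset, Set.inter_comm]

lemma indep_event (P : Measure Ω) [IsProbabilityMeasure P] {β : Type*} [MeasurableSpace β]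
    {Z : Ω → ℝ} {W : Ω → β} (hindep : IndepFun Z W P)
    (B : Set β) (hB : MeasurableSet B) (c : ℝ) :
    (P ({ω | Z ω = c} ∩ W ⁻¹' B)).toReal
      = (P {ω | Z ω = c}).toReal * (P (W ⁻¹' B)).toReal := by
  have h := hindep.measure_inter_preimage_eq_mul {c} B (measurableSet_singleton c) hB
  have hZc : Z ⁻¹' {c} = {ω | Z ω = c} := rfl
  rw [hZc] at h
  rw [h, ENNReal.toReal_mul]

lemma indep_setIntegral (P : Measure Ω) [IsProbabilityMeasure P] {β : Type*} [MeasurableSpace β]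
    {Z : Ω → ℝ} {W : Ω → β} (hZm : Measurable Z) (hWm : AEMeasurable W P)
    (hindep : IndepFun Z W P)
    (g : β → ℝ) (hg : Measurable g) (c : ℝ) :
    ∫ ω in {ω | Z ω = c}, g (W ω) ∂P
      = (P {ω | Z ω = c}).toReal * ∫ ω, g (W ω) ∂P := by
  have hzc : MeasurableSet {ω | Z ω = c} := hZm (measurableSet_singleton c)
  have hφ : Measurable (fun x : ℝ => if x = c then (1 : ℝ) else 0) :=
    Measurable.ite (measurableSet_eq) measurable_const measurable_const
  have hcomp : IndepFun ((fun x : ℝ => if x = c then (1 : ℝ) else 0) ∘ Z) (g ∘ W) P :=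
    hindep.comp hφ hg
  have hmul := hcomp.integral_mul_eq_mul_integral
    ((hφ.comp hZm).aestronglyMeasurable)
    ((hg.comp_aemeasurable hWm).aestronglyMeasurable)
  have h1 : ∫ ω, ((fun x : ℝ => if x = c then (1 : ℝ) else 0) ∘ Z) ω ∂P
      = (P {ω | Z ω = c}).toReal := by
    have : ((fun x : ℝ => if x = c then (1 : ℝ) else 0) ∘ Z)
        = Set.indicator {ω | Z ω = c} (fun _ => (1 : ℝ)) := by
      funext ω
      by_cases h : Z ω = c <;> simp [Set.indicator_apply, Set.mem_setOf_eq, h]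
    rw [this, integral_indicator_const (1 : ℝ) hzc, smul_eq_mul, mul_one]
    rfl
  have h2 : ∫ ω in {ω | Z ω = c}, g (W ω) ∂P
      = ∫ ω, (((fun x : ℝ => if x = c then (1 : ℝ) else 0) ∘ Z) * (g ∘ W)) ω ∂P := by
    rw [← integral_indicator hzc]
    congr 1
    funext ω
    by_cases h : Z ω = c <;>
      simp [Set.indicator_apply, Set.mem_setOf_eq, h, Pi.mul_apply, Function.comp]
  rw [h2, hmul, h1]
  rfl

lemma cell_identify (P : Measure Ω) [IsProbabilityMeasure P]
    (Z D S Y ΔS ΔY Dc S1 Y1 : Ω → ℝ) (c : ℝ)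
    (hZm : Measurable Z) (hDm : Measurable D) (hSm : Measurable S)
    (hΔSm : Measurable ΔS) (hΔYm : Measurable ΔY)
    (hDcm : Measurable Dc) (hS1m : Measurable S1) (hY1ae : AEMeasurable Y1 P)
    (hSb : ∀ ω, S ω = 0 ∨ S ω = 1)
    (hΔSb : ∀ ω, ΔS ω = 0 ∨ ΔS ω = 1)
    (hΔYb : ∀ ω, ΔY ω = 0 ∨ ΔY ω = 1)
    (hDc : ∀ ω, Z ω = c → D ω = Dc ω)
    (hSD : ∀ ω, D ω = 1 → S ω = S1 ω)
    (hYD : ∀ ω, D ω = 1 → Y ω = Y1 ω)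
    (hindep : IndepFun Z (fun ω => (Dc ω, S1 ω, Y1 ω)) P)
    (hMARS : cprob P {ω | Z ω = c ∧ D ω = 1} {ω | ΔS ω = 1 ∧ S ω = 1}
      = cprob P {ω | Z ω = c ∧ D ω = 1} {ω | ΔS ω = 1}
        * cprob P {ω | Z ω = c ∧ D ω = 1} {ω | S ω = 1})
    (hMARY : 0 < (P {ω | Z ω = c ∧ D ω = 1 ∧ S ω = 1}).toReal →
      cexp P {ω | Z ω = c ∧ D ω = 1 ∧ S ω = 1} (fun ω => Y ω * ΔY ω)
        = cexp P {ω | Z ω = c ∧ D ω = 1 ∧ S ω = 1} Y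
          * cexp P {ω | Z ω = c ∧ D ω = 1 ∧ S ω = 1} ΔY)
    (hAS : 0 < (P {ω | Z ω = c ∧ D ω = 1 ∧ ΔS ω = 1}).toReal)
    (hBY : 0 < (P {ω | Z ω = c ∧ D ω = 1 ∧ S ω = 1 ∧ ΔY ω = 1}).toReal) :
    cprob P {ω | Z ω = c} {ω | D ω = 1} * cexp P {ω | Z ω = c ∧ D ω = 1 ∧ ΔS ω = 1} S
      = (P {ω | Dc ω = 1 ∧ S1 ω = 1}).toReal ∧
    cprob P {ω | Z ω = c} {ω | D ω = 1} * cexp P {ω | Z ω = c ∧ D ω = 1 ∧ ΔS ω = 1} S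
      * cexp P {ω | Z ω = c ∧ D ω = 1 ∧ S ω = 1 ∧ ΔY ω = 1} Y
      = ∫ ω in {ω | Dc ω = 1 ∧ S1 ω = 1}, Y1 ω ∂P := by
  have hW3 : AEMeasurable (fun ω => (Dc ω, S1 ω, Y1 ω)) P :=
    (hDcm.aemeasurable.prodMk (hS1m.aemeasurable.prodMk hY1ae))
  -- measurable sets
  have hmA : MeasurableSet {ω | Z ω = c ∧ D ω = 1} :=
    (hZm (measurableSet_singleton c)).inter (hDm (measurableSet_singleton 1))
  have hmAS : MeasurableSet {ω | Z ω = c ∧ D ω = 1 ∧ ΔS ω = 1} :=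
    (hZm (measurableSet_singleton c)).inter
      ((hDm (measurableSet_singleton 1)).inter (hΔSm (measurableSet_singleton 1)))
  have hmB : MeasurableSet {ω | Z ω = c ∧ D ω = 1 ∧ S ω = 1} :=
    (hZm (measurableSet_singleton c)).inter
      ((hDm (measurableSet_singleton 1)).inter (hSm (measurableSet_singleton 1)))
  -- positivity transfers
  have hA : 0 < (P {ω | Z ω = c ∧ D ω = 1}).toReal :=
    toReal_mono_pos P (fun ω h => ⟨h.1, h.2.1⟩) hAS
  have hB : 0 < (P {ω | Z ω = c ∧ D ω = 1 ∧ S ω = 1}).toReal :=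
    toReal_mono_pos P (fun ω h => ⟨h.1, h.2.1, h.2.2.1⟩) hBY
  have hzS : 0 < (P {ω | Z ω = c}).toReal :=
    toReal_mono_pos P (fun ω h => h.1) hA
  -- abbreviations
  set a := (P {ω | Z ω = c ∧ D ω = 1}).toReal with ha_def
  set t := (P {ω | Z ω = c ∧ D ω = 1 ∧ ΔS ω = 1}).toReal with ht_def
  set b := (P {ω | Z ω = c ∧ D ω = 1 ∧ S ω = 1}).toReal with hb_def
  set v := (P {ω | Z ω = c ∧ D ω = 1 ∧ S ω = 1 ∧ ΔY ω = 1}).toReal with hv_def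
  set z := (P {ω | Z ω = c}).toReal with hz_def
  -- step (iii): MAR-S consequence
  have hset1 : {ω | ΔS ω = 1 ∧ S ω = 1} ∩ {ω | Z ω = c ∧ D ω = 1}
      = {ω | S ω = 1} ∩ {ω | Z ω = c ∧ D ω = 1 ∧ ΔS ω = 1} := by
    ext ω; simp only [Set.mem_inter_iff, Set.mem_setOf_eq]; tauto
  have hset2 : {ω | ΔS ω = 1} ∩ {ω | Z ω = c ∧ D ω = 1}
      = {ω | Z ω = c ∧ D ω = 1 ∧ ΔS ω = 1} := by
    ext ω; simp only [Set.mem_inter_iff, Set.mem_setOf_eq]; tauto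
  have hset3 : {ω | S ω = 1} ∩ {ω | Z ω = c ∧ D ω = 1}
      = {ω | Z ω = c ∧ D ω = 1 ∧ S ω = 1} := by
    ext ω; simp only [Set.mem_inter_iff, Set.mem_setOf_eq]; tauto
  rw [cprob, cprob, cprob, hset1, hset2, hset3] at hMARS
  -- e1 : the observed S-mean equals b / a
  have hintS : ∫ ω in {ω | Z ω = c ∧ D ω = 1 ∧ ΔS ω = 1}, S ω ∂P
      = (P ({ω | S ω = 1} ∩ {ω | Z ω = c ∧ D ω = 1 ∧ ΔS ω = 1})).toReal :=
    setIntegral_of_binary P hSm hSb _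
  have he1 : cexp P {ω | Z ω = c ∧ D ω = 1 ∧ ΔS ω = 1} S = b / a := by
    rw [cexp, hintS]
    have hu : (P ({ω | S ω = 1} ∩ {ω | Z ω = c ∧ D ω = 1 ∧ ΔS ω = 1})).toReal
        = t * b / a := by
      have hx := hMARS
      rw [div_eq_iff (ne_of_gt hA)] at hx
      rw [hx, ← ha_def, ← ht_def, ← hb_def]; field_simp
    rw [hu, mul_div_assoc, mul_div_cancel_left₀ _ (ne_of_gt hAS)]
  -- p1 : cprob
  have hset4 : {ω | D ω = 1} ∩ {ω | Z ω = c} = {ω | Z ω = c ∧ D ω = 1} := by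
    ext ω; simp only [Set.mem_inter_iff, Set.mem_setOf_eq]; tauto
  have hp1 : cprob P {ω | Z ω = c} {ω | D ω = 1} = a / z := by
    rw [cprob, hset4]
  -- B as independent event
  have hsetB : {ω | Z ω = c ∧ D ω = 1 ∧ S ω = 1}
      = {ω | Z ω = c} ∩ (fun ω => (Dc ω, S1 ω, Y1 ω)) ⁻¹' {q : ℝ × ℝ × ℝ | q.1 = 1 ∧ q.2.1 = 1} := by
    ext ω
    simp only [Set.mem_inter_iff, Set.mem_setOf_eq, Set.mem_preimage]
    constructor
    · rintro ⟨h1, h2, h3⟩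
      exact ⟨h1, by rw [← hDc ω h1]; exact h2, by rw [← hSD ω h2]; exact h3⟩
    · rintro ⟨h1, h2, h3⟩
      have hd : D ω = 1 := by rw [hDc ω h1]; exact h2
      exact ⟨h1, hd, by rw [hSD ω hd]; exact h3⟩
  have hmE : MeasurableSet {q : ℝ × ℝ × ℝ | q.1 = 1 ∧ q.2.1 = 1} :=
    (measurable_fst (measurableSet_singleton 1)).inter
      ((measurable_fst.comp measurable_snd) (measurableSet_singleton 1))
  have hbQ : b = z * (P {ω | Dc ω = 1 ∧ S1 ω = 1}).toReal := by
    rw [hb_def, hsetB]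
    exact indep_event P hindep _ hmE c
  -- first conclusion
  have hQ1 : cprob P {ω | Z ω = c} {ω | D ω = 1}
      * cexp P {ω | Z ω = c ∧ D ω = 1 ∧ ΔS ω = 1} S
      = (P {ω | Dc ω = 1 ∧ S1 ω = 1}).toReal := by
    rw [hp1, he1, hbQ]
    field_simp
  refine ⟨hQ1, ?_⟩
  -- now the Y part
  have hMARY' := hMARY hB
  have hset5 : {ω | ΔY ω = 1} ∩ {ω | Z ω = c ∧ D ω = 1 ∧ S ω = 1}
      = {ω | Z ω = c ∧ D ω = 1 ∧ S ω = 1 ∧ ΔY ω = 1} := by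
    ext ω; simp only [Set.mem_inter_iff, Set.mem_setOf_eq]; tauto
  have hintYΔ : ∫ ω in {ω | Z ω = c ∧ D ω = 1 ∧ S ω = 1}, Y ω * ΔY ω ∂P
      = ∫ ω in {ω | Z ω = c ∧ D ω = 1 ∧ S ω = 1 ∧ ΔY ω = 1}, Y ω ∂P := by
    rw [setIntegral_mul_binary P hΔYm hΔYb, hset5]
  have hintΔ : ∫ ω in {ω | Z ω = c ∧ D ω = 1 ∧ S ω = 1}, ΔY ω ∂P = v := by
    rw [setIntegral_of_binary P hΔYm hΔYb, hset5]
  have heY : cexp P {ω | Z ω = c ∧ D ω = 1 ∧ S ω = 1 ∧ ΔY ω = 1} Y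
      = (∫ ω in {ω | Z ω = c ∧ D ω = 1 ∧ S ω = 1}, Y ω ∂P) / b := by
    simp only [cexp] at hMARY'
    rw [hintYΔ, hintΔ] at hMARY'
    simp only [cexp]
    have hbne : b ≠ 0 := ne_of_gt hB
    have hvne : v ≠ 0 := ne_of_gt hBY
    have hkey : ∫ ω in {ω | Z ω = c ∧ D ω = 1 ∧ S ω = 1 ∧ ΔY ω = 1}, Y ω ∂P
        = (∫ ω in {ω | Z ω = c ∧ D ω = 1 ∧ S ω = 1}, Y ω ∂P) * v / b := by
      field_simp at hMARY'
      rw [← hb_def] at hMARY'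
      rw [eq_div_iff hbne]
      have h2 : ((∫ ω in {ω | Z ω = c ∧ D ω = 1 ∧ S ω = 1 ∧ ΔY ω = 1}, Y ω ∂P) * b) * b
          = ((∫ ω in {ω | Z ω = c ∧ D ω = 1 ∧ S ω = 1}, Y ω ∂P) * v) * b := by
        field_simp at hMARY'
        linear_combination b * hMARY'
      exact mul_right_cancel₀ hbne h2
    rw [hkey]
    field_simp
    rw [← hv_def]
    rw [mul_div_cancel_right₀ _ hvne]
  -- ∫_B Y = ∫_B Y1 and independence
  have hYeq : ∫ ω in {ω | Z ω = c ∧ D ω = 1 ∧ S ω = 1}, Y ω ∂P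
      = ∫ ω in {ω | Z ω = c ∧ D ω = 1 ∧ S ω = 1}, Y1 ω ∂P :=
    setIntegral_congr_fun hmB (fun ω h => hYD ω h.2.1)
  have hg : Measurable fun q : ℝ × ℝ × ℝ =>
      Set.indicator {q : ℝ × ℝ × ℝ | q.1 = 1 ∧ q.2.1 = 1} (fun q => q.2.2) q :=
    (measurable_snd.comp measurable_snd).indicator hmE
  have hgW : ∀ ω, Set.indicator {q : ℝ × ℝ × ℝ | q.1 = 1 ∧ q.2.1 = 1}
        (fun q : ℝ × ℝ × ℝ => q.2.2) (Dc ω, S1 ω, Y1 ω)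
      = Set.indicator {ω | Dc ω = 1 ∧ S1 ω = 1} Y1 ω := by
    intro ω
    by_cases h : Dc ω = 1 ∧ S1 ω = 1 <;>
      simp [Set.indicator_apply, Set.mem_setOf_eq, h]
  have hmE' : MeasurableSet {ω | Dc ω = 1 ∧ S1 ω = 1} :=
    (hDcm (measurableSet_singleton 1)).inter (hS1m (measurableSet_singleton 1))
  have hintY1 : ∫ ω in {ω | Z ω = c ∧ D ω = 1 ∧ S ω = 1}, Y1 ω ∂P
      = z * ∫ ω in {ω | Dc ω = 1 ∧ S1 ω = 1}, Y1 ω ∂P := by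
    have hpre : (fun ω => (Dc ω, S1 ω, Y1 ω)) ⁻¹' {q : ℝ × ℝ × ℝ | q.1 = 1 ∧ q.2.1 = 1}
        = {ω | Dc ω = 1 ∧ S1 ω = 1} := rfl
    rw [hsetB, hpre, ← setIntegral_indicator (μ := P) (s := {ω | Z ω = c})
      (f := fun ω => Y1 ω) hmE']
    have h1 : ∫ ω in {ω | Z ω = c}, Set.indicator {ω | Dc ω = 1 ∧ S1 ω = 1} Y1 ω ∂P
        = ∫ ω in {ω | Z ω = c},
            Set.indicator {q : ℝ × ℝ × ℝ | q.1 = 1 ∧ q.2.1 = 1}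
              (fun q : ℝ × ℝ × ℝ => q.2.2) (Dc ω, S1 ω, Y1 ω) ∂P :=
      setIntegral_congr_fun (hZm (measurableSet_singleton c))
        (fun ω _ => (hgW ω).symm)
    rw [h1]
    rw [indep_setIntegral P hZm hW3 hindep _ hg c]
    congr 1
    rw [show (fun ω => Set.indicator {q : ℝ × ℝ × ℝ | q.1 = 1 ∧ q.2.1 = 1}
          (fun q : ℝ × ℝ × ℝ => q.2.2) (Dc ω, S1 ω, Y1 ω))
        = Set.indicator {ω | Dc ω = 1 ∧ S1 ω = 1} Y1 from funext hgW]
    exact integral_indicator hmE'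
  -- assemble second conclusion
  rw [hQ1, heY, hYeq, hintY1, hbQ]
  have hz0 : z ≠ 0 := ne_of_gt hzS
  have hQ0 : (P {ω | Dc ω = 1 ∧ S1 ω = 1}).toReal ≠ 0 := by
    intro h0
    rw [hbQ, h0, mul_zero] at hB
    exact lt_irrefl 0 hB
  field_simp

/-- Theorem 1 with missing data, treated-arm part: Under randomization, monotonicity, relevance, principal ignorability and MAR in the cells `(1,1)` and `(0,1)`, `E[Y₁ | cl]` is identified from the observed data as a ratio of differences of `P(D=1|Z=z)·E[S|Z=z,D=1,Δ_S=1]·E[Y|Z=z,D=1,S=1,Δ_Y=1]` terms, and the denominator is strictly positive. -/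
theorem stmt_16
    (P : Measure Ω) [IsProbabilityMeasure P]
    (Z D0 D1 S0 S1 Y0 Y1 D S Y : Ω → ℝ)
    (hZm : Measurable Z) (hD0m : Measurable D0) (hD1m : Measurable D1)
    (hS0m : Measurable S0) (hS1m : Measurable S1)
    (hY0i : Integrable Y0 P) (hY1i : Integrable Y1 P)
    (hZb : ∀ ω, Z ω = 0 ∨ Z ω = 1)
    (hD0b : ∀ ω, D0 ω = 0 ∨ D0 ω = 1)
    (hD1b : ∀ ω, D1 ω = 0 ∨ D1 ω = 1)
    (hS0b : ∀ ω, S0 ω = 0 ∨ S0 ω = 1)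
    (hS1b : ∀ ω, S1 ω = 0 ∨ S1 ω = 1)
    (hD : ∀ ω, D ω = Z ω * D1 ω + (1 - Z ω) * D0 ω)
    (hS : ∀ ω, S ω = D ω * S1 ω + (1 - D ω) * S0 ω)
    (hY : ∀ ω, Y ω = D ω * Y1 ω + (1 - D ω) * Y0 ω)
    (hindep : IndepFun Z (fun ω => (D0 ω, D1 ω, S0 ω, S1 ω, Y0 ω, Y1 ω)) P)
    (hZpos : 0 < (P {ω | Z ω = 1}).toReal)
    (hZlt1 : (P {ω | Z ω = 1}).toReal < 1)
    (hmono : ∀ᵐ ω ∂P, D0 ω ≤ D1 ω)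
    (hrel : ∫ ω, D1 ω ∂P ≠ ∫ ω, D0 ω ∂P)
    (hclpos : 0 < (P {ω | D1 ω = 1 ∧ D0 ω = 0 ∧ S1 ω = 1 ∧ S0 ω = 1}).toReal)
    (hcppos : 0 < (P {ω | D1 ω = 1 ∧ D0 ω = 0 ∧ S1 ω = 1 ∧ S0 ω = 0}).toReal)
    (hchpos : 0 < (P {ω | D1 ω = 1 ∧ D0 ω = 0 ∧ S1 ω = 0 ∧ S0 ω = 1}).toReal)
    (hPI1 : cexp P {ω | D1 ω = 1 ∧ D0 ω = 0 ∧ S1 ω = 1 ∧ S0 ω = 1} Y1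
      = cexp P {ω | D1 ω = 1 ∧ D0 ω = 0 ∧ S1 ω = 1 ∧ S0 ω = 0} Y1)
    (hPI0 : cexp P {ω | D1 ω = 1 ∧ D0 ω = 0 ∧ S1 ω = 1 ∧ S0 ω = 1} Y0
      = cexp P {ω | D1 ω = 1 ∧ D0 ω = 0 ∧ S1 ω = 0 ∧ S0 ω = 1} Y0)
    (hcS1pos : 0 < (P ({ω | D1 ω = 1 ∧ D0 ω = 0} ∩ {ω | S1 ω = 1})).toReal)
    (ΔS ΔY : Ω → ℝ)
    (hΔSm : Measurable ΔS) (hΔYm : Measurable ΔY)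
    (hΔSb : ∀ ω, ΔS ω = 0 ∨ ΔS ω = 1)
    (hΔYb : ∀ ω, ΔY ω = 0 ∨ ΔY ω = 1)
    (hMARS11 : cprob P {ω | Z ω = 1 ∧ D ω = 1} {ω | ΔS ω = 1 ∧ S ω = 1}
      = cprob P {ω | Z ω = 1 ∧ D ω = 1} {ω | ΔS ω = 1} * cprob P {ω | Z ω = 1 ∧ D ω = 1} {ω | S ω = 1})
    (hMARY11 : 0 < (P {ω | Z ω = 1 ∧ D ω = 1 ∧ S ω = 1}).toReal →
      cexp P {ω | Z ω = 1 ∧ D ω = 1 ∧ S ω = 1} (fun ω => Y ω * ΔY ω)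
        = cexp P {ω | Z ω = 1 ∧ D ω = 1 ∧ S ω = 1} Y * cexp P {ω | Z ω = 1 ∧ D ω = 1 ∧ S ω = 1} ΔY)
    (hΔSpos11 : 0 < (P {ω | Z ω = 1 ∧ D ω = 1 ∧ ΔS ω = 1}).toReal)
    (hΔYpos11 : 0 < (P {ω | Z ω = 1 ∧ D ω = 1 ∧ S ω = 1 ∧ ΔY ω = 1}).toReal)
    (hMARS01 : cprob P {ω | Z ω = 0 ∧ D ω = 1} {ω | ΔS ω = 1 ∧ S ω = 1}
      = cprob P {ω | Z ω = 0 ∧ D ω = 1} {ω | ΔS ω = 1} * cprob P {ω | Z ω = 0 ∧ D ω = 1} {ω | S ω = 1})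
    (hMARY01 : 0 < (P {ω | Z ω = 0 ∧ D ω = 1 ∧ S ω = 1}).toReal →
      cexp P {ω | Z ω = 0 ∧ D ω = 1 ∧ S ω = 1} (fun ω => Y ω * ΔY ω)
        = cexp P {ω | Z ω = 0 ∧ D ω = 1 ∧ S ω = 1} Y * cexp P {ω | Z ω = 0 ∧ D ω = 1 ∧ S ω = 1} ΔY)
    (hΔSpos01 : 0 < (P {ω | Z ω = 0 ∧ D ω = 1 ∧ ΔS ω = 1}).toReal)
    (hΔYpos01 : 0 < (P {ω | Z ω = 0 ∧ D ω = 1 ∧ S ω = 1 ∧ ΔY ω = 1}).toReal)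
    :
    0 < cprob P {ω | Z ω = 1} {ω | D ω = 1}
          * cexp P {ω | Z ω = 1 ∧ D ω = 1 ∧ ΔS ω = 1} S
        - cprob P {ω | Z ω = 0} {ω | D ω = 1}
          * cexp P {ω | Z ω = 0 ∧ D ω = 1 ∧ ΔS ω = 1} S ∧
    cexp P {ω | D1 ω = 1 ∧ D0 ω = 0 ∧ S1 ω = 1 ∧ S0 ω = 1} Y1
      = (cprob P {ω | Z ω = 1} {ω | D ω = 1}
          * cexp P {ω | Z ω = 1 ∧ D ω = 1 ∧ ΔS ω = 1} S
          * cexp P {ω | Z ω = 1 ∧ D ω = 1 ∧ S ω = 1 ∧ ΔY ω = 1} Y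
        - cprob P {ω | Z ω = 0} {ω | D ω = 1}
          * cexp P {ω | Z ω = 0 ∧ D ω = 1 ∧ ΔS ω = 1} S
          * cexp P {ω | Z ω = 0 ∧ D ω = 1 ∧ S ω = 1 ∧ ΔY ω = 1} Y)
        / (cprob P {ω | Z ω = 1} {ω | D ω = 1}
          * cexp P {ω | Z ω = 1 ∧ D ω = 1 ∧ ΔS ω = 1} S
        - cprob P {ω | Z ω = 0} {ω | D ω = 1}
          * cexp P {ω | Z ω = 0 ∧ D ω = 1 ∧ ΔS ω = 1} S) := by
  -- pointwise structure
  have hDm : Measurable D := by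
    rw [funext hD]
    exact (hZm.mul hD1m).add ((measurable_const.sub hZm).mul hD0m)
  have hSm : Measurable S := by
    rw [funext hS]
    exact (hDm.mul hS1m).add ((measurable_const.sub hDm).mul hS0m)
  have hDb : ∀ ω, D ω = 0 ∨ D ω = 1 := by
    intro ω
    rcases hZb ω with h | h <;> rw [hD ω, h]
    · simpa using hD0b ω
    · simpa using hD1b ω
  have hSb : ∀ ω, S ω = 0 ∨ S ω = 1 := by
    intro ω
    rcases hDb ω with h | h <;> rw [hS ω, h]
    · simpa using hS0b ω
    · simpa using hS1b ω
  have hDZ1 : ∀ ω, Z ω = 1 → D ω = D1 ω := fun ω h => by rw [hD ω, h]; ring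
  have hDZ0 : ∀ ω, Z ω = 0 → D ω = D0 ω := fun ω h => by rw [hD ω, h]; ring
  have hSD : ∀ ω, D ω = 1 → S ω = S1 ω := fun ω h => by rw [hS ω, h]; ring
  have hYD : ∀ ω, D ω = 1 → Y ω = Y1 ω := fun ω h => by rw [hY ω, h]; ring
  have hY1ae : AEMeasurable Y1 P := hY1i.aemeasurable
  -- marginal independence
  have hindep1 : IndepFun Z (fun ω => (D1 ω, S1 ω, Y1 ω)) P := by
    have hproj : Measurable fun p : ℝ × ℝ × ℝ × ℝ × ℝ × ℝ =>
        (p.2.1, p.2.2.2.1, p.2.2.2.2.2) := by fun_prop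
    exact hindep.comp measurable_id hproj
  have hindep0 : IndepFun Z (fun ω => (D0 ω, S1 ω, Y1 ω)) P := by
    have hproj : Measurable fun p : ℝ × ℝ × ℝ × ℝ × ℝ × ℝ =>
        (p.1, p.2.2.2.1, p.2.2.2.2.2) := by fun_prop
    exact hindep.comp measurable_id hproj
  -- cell identification
  obtain ⟨hQ1, hN1⟩ := cell_identify P Z D S Y ΔS ΔY D1 S1 Y1 1 hZm hDm hSm hΔSm hΔYm
    hD1m hS1m hY1ae hSb hΔSb hΔYb hDZ1 hSD hYD hindep1 hMARS11 hMARY11 hΔSpos11 hΔYpos11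
  obtain ⟨hQ0, hN0⟩ := cell_identify P Z D S Y ΔS ΔY D0 S1 Y1 0 hZm hDm hSm hΔSm hΔYm
    hD0m hS1m hY1ae hSb hΔSb hΔYb hDZ0 hSD hYD hindep0 hMARS01 hMARY01 hΔSpos01 hΔYpos01
  -- monotonicity consequence
  have hmono1 : ∀ᵐ ω ∂P, D0 ω = 1 → D1 ω = 1 := by
    filter_upwards [hmono] with ω h h0
    rcases hD1b ω with h1 | h1
    · exfalso; rw [h0, h1] at h; linarith
    · exact h1
  -- set decompositions
  have hmV : MeasurableSet {ω | D0 ω = 1 ∧ S1 ω = 1} :=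
    (hD0m (measurableSet_singleton 1)).inter (hS1m (measurableSet_singleton 1))
  have hmC : MeasurableSet {ω | D1 ω = 1 ∧ D0 ω = 0 ∧ S1 ω = 1} :=
    (hD1m (measurableSet_singleton 1)).inter
      ((hD0m (measurableSet_singleton 0)).inter (hS1m (measurableSet_singleton 1)))
  have hmCP : MeasurableSet {ω | D1 ω = 1 ∧ D0 ω = 0 ∧ S1 ω = 1 ∧ S0 ω = 0} :=
    (hD1m (measurableSet_singleton 1)).inter
      ((hD0m (measurableSet_singleton 0)).inter
        ((hS1m (measurableSet_singleton 1)).inter (hS0m (measurableSet_singleton 0))))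
  have hUVC : ({ω | D1 ω = 1 ∧ S1 ω = 1} : Set Ω)
      =ᵐ[P] (({ω | D0 ω = 1 ∧ S1 ω = 1} ∪ {ω | D1 ω = 1 ∧ D0 ω = 0 ∧ S1 ω = 1} : Set Ω)) := by
    rw [Filter.eventuallyEq_set]
    filter_upwards [hmono1] with ω h
    simp only [Set.mem_union, Set.mem_setOf_eq]
    rcases hD0b ω with h0 | h0
    · constructor
      · rintro ⟨h1, h2⟩; exact Or.inr ⟨h1, h0, h2⟩
      · rintro (⟨h1, h2⟩ | ⟨h1, _, h2⟩)
        · rw [h1] at h0; norm_num at h0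
        · exact ⟨h1, h2⟩
    · constructor
      · rintro ⟨h1, h2⟩; exact Or.inl ⟨h0, h2⟩
      · rintro (⟨h1, h2⟩ | ⟨h1, h2, h3⟩)
        · exact ⟨h h1, h2⟩
        · rw [h0] at h2; norm_num at h2
  have hdisjVC : Disjoint ({ω | D0 ω = 1 ∧ S1 ω = 1} : Set Ω)
      {ω | D1 ω = 1 ∧ D0 ω = 0 ∧ S1 ω = 1} := by
    rw [Set.disjoint_left]
    rintro ω ⟨h1, _⟩ ⟨_, h2, _⟩
    rw [h1] at h2; norm_num at h2
  have hq : (P {ω | D1 ω = 1 ∧ S1 ω = 1}).toReal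
      = (P {ω | D0 ω = 1 ∧ S1 ω = 1}).toReal
        + (P {ω | D1 ω = 1 ∧ D0 ω = 0 ∧ S1 ω = 1}).toReal := by
    rw [measure_congr hUVC, measure_union hdisjVC hmC,
      ENNReal.toReal_add (measure_ne_top P _) (measure_ne_top P _)]
  have hn : ∫ ω in {ω | D1 ω = 1 ∧ S1 ω = 1}, Y1 ω ∂P
      = (∫ ω in {ω | D0 ω = 1 ∧ S1 ω = 1}, Y1 ω ∂P)
        + ∫ ω in {ω | D1 ω = 1 ∧ D0 ω = 0 ∧ S1 ω = 1}, Y1 ω ∂P := by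
    rw [setIntegral_congr_set hUVC,
      setIntegral_union hdisjVC hmC hY1i.integrableOn hY1i.integrableOn]
  -- complier-survivor decomposition
  have hCsplit : ({ω | D1 ω = 1 ∧ D0 ω = 0 ∧ S1 ω = 1 ∧ S0 ω = 1} : Set Ω)
      ∪ {ω | D1 ω = 1 ∧ D0 ω = 0 ∧ S1 ω = 1 ∧ S0 ω = 0}
      = {ω | D1 ω = 1 ∧ D0 ω = 0 ∧ S1 ω = 1} := by
    ext ω
    simp only [Set.mem_union, Set.mem_setOf_eq]
    rcases hS0b ω with h | h <;> [skip; skip] <;> constructor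
    · rintro (⟨h1, h2, h3, _⟩ | ⟨h1, h2, h3, _⟩) <;> exact ⟨h1, h2, h3⟩
    · rintro ⟨h1, h2, h3⟩; exact Or.inr ⟨h1, h2, h3, h⟩
    · rintro (⟨h1, h2, h3, _⟩ | ⟨h1, h2, h3, _⟩) <;> exact ⟨h1, h2, h3⟩
    · rintro ⟨h1, h2, h3⟩; exact Or.inl ⟨h1, h2, h3, h⟩
  have hdisjCLCP : Disjoint ({ω | D1 ω = 1 ∧ D0 ω = 0 ∧ S1 ω = 1 ∧ S0 ω = 1} : Set Ω)
      {ω | D1 ω = 1 ∧ D0 ω = 0 ∧ S1 ω = 1 ∧ S0 ω = 0} := by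
    rw [Set.disjoint_left]
    rintro ω ⟨_, _, _, h1⟩ ⟨_, _, _, h2⟩
    rw [h1] at h2; norm_num at h2
  have hqsplit : (P {ω | D1 ω = 1 ∧ D0 ω = 0 ∧ S1 ω = 1}).toReal
      = (P {ω | D1 ω = 1 ∧ D0 ω = 0 ∧ S1 ω = 1 ∧ S0 ω = 1}).toReal
        + (P {ω | D1 ω = 1 ∧ D0 ω = 0 ∧ S1 ω = 1 ∧ S0 ω = 0}).toReal := by
    rw [← hCsplit, measure_union hdisjCLCP hmCP,
      ENNReal.toReal_add (measure_ne_top P _) (measure_ne_top P _)]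
  have hnsplit : ∫ ω in {ω | D1 ω = 1 ∧ D0 ω = 0 ∧ S1 ω = 1}, Y1 ω ∂P
      = (∫ ω in {ω | D1 ω = 1 ∧ D0 ω = 0 ∧ S1 ω = 1 ∧ S0 ω = 1}, Y1 ω ∂P)
        + ∫ ω in {ω | D1 ω = 1 ∧ D0 ω = 0 ∧ S1 ω = 1 ∧ S0 ω = 0}, Y1 ω ∂P := by
    rw [← hCsplit, setIntegral_union hdisjCLCP hmCP hY1i.integrableOn hY1i.integrableOn]
  -- positivity of the complier-survivor stratum
  have hqpos : 0 < (P {ω | D1 ω = 1 ∧ D0 ω = 0 ∧ S1 ω = 1}).toReal := by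
    have hCeq : ({ω | D1 ω = 1 ∧ D0 ω = 0} : Set Ω) ∩ {ω | S1 ω = 1}
        = {ω | D1 ω = 1 ∧ D0 ω = 0 ∧ S1 ω = 1} := by
      ext ω; simp only [Set.mem_inter_iff, Set.mem_setOf_eq]; tauto
    rwa [hCeq] at hcS1pos
  -- principal ignorability consequence
  have hICL : ∫ ω in {ω | D1 ω = 1 ∧ D0 ω = 0 ∧ S1 ω = 1 ∧ S0 ω = 1}, Y1 ω ∂P
      = cexp P {ω | D1 ω = 1 ∧ D0 ω = 0 ∧ S1 ω = 1 ∧ S0 ω = 1} Y1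
        * (P {ω | D1 ω = 1 ∧ D0 ω = 0 ∧ S1 ω = 1 ∧ S0 ω = 1}).toReal := by
    rw [cexp]
    field_simp
  have hICP : ∫ ω in {ω | D1 ω = 1 ∧ D0 ω = 0 ∧ S1 ω = 1 ∧ S0 ω = 0}, Y1 ω ∂P
      = cexp P {ω | D1 ω = 1 ∧ D0 ω = 0 ∧ S1 ω = 1 ∧ S0 ω = 1} Y1
        * (P {ω | D1 ω = 1 ∧ D0 ω = 0 ∧ S1 ω = 1 ∧ S0 ω = 0}).toReal := by
    rw [hPI1, cexp]
    field_simp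
  -- assemble
  have hden : cprob P {ω | Z ω = 1} {ω | D ω = 1}
        * cexp P {ω | Z ω = 1 ∧ D ω = 1 ∧ ΔS ω = 1} S
      - cprob P {ω | Z ω = 0} {ω | D ω = 1}
        * cexp P {ω | Z ω = 0 ∧ D ω = 1 ∧ ΔS ω = 1} S
      = (P {ω | D1 ω = 1 ∧ D0 ω = 0 ∧ S1 ω = 1}).toReal := by
    rw [hQ1, hQ0]; linarith [hq]
  have hnum : cprob P {ω | Z ω = 1} {ω | D ω = 1}
        * cexp P {ω | Z ω = 1 ∧ D ω = 1 ∧ ΔS ω = 1} S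
        * cexp P {ω | Z ω = 1 ∧ D ω = 1 ∧ S ω = 1 ∧ ΔY ω = 1} Y
      - cprob P {ω | Z ω = 0} {ω | D ω = 1}
        * cexp P {ω | Z ω = 0 ∧ D ω = 1 ∧ ΔS ω = 1} S
        * cexp P {ω | Z ω = 0 ∧ D ω = 1 ∧ S ω = 1 ∧ ΔY ω = 1} Y
      = cexp P {ω | D1 ω = 1 ∧ D0 ω = 0 ∧ S1 ω = 1 ∧ S0 ω = 1} Y1
        * (P {ω | D1 ω = 1 ∧ D0 ω = 0 ∧ S1 ω = 1}).toReal := by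
    rw [hN1, hN0]
    rw [show (∫ ω in {ω | D1 ω = 1 ∧ S1 ω = 1}, Y1 ω ∂P)
        - ∫ ω in {ω | D0 ω = 1 ∧ S1 ω = 1}, Y1 ω ∂P
        = ∫ ω in {ω | D1 ω = 1 ∧ D0 ω = 0 ∧ S1 ω = 1}, Y1 ω ∂P from by linarith [hn]]
    rw [hnsplit, hICL, hICP, hqsplit]
    ring
  constructor
  · rw [hden]; exact hqpos
  · rw [hden, hnum]
    field_simp [ne_of_gt hqpos]
end

section
/- (Theorem 1 with missing data, control-arm part.) Assume randomization, monotonicity, relevance and principal ignorability with P(cl) > 0, P(cp) > 0, P(ch) > 0 and P(c ∩ {S₀=1}) > 0, and assume the missingness-at-random conditions hold in the cells (z,d) = (1,0) and (0,0), with P(Z=z, D=0, Δ_S=1) > 0 and P(Z=z, D=0, S=1, Δ_Y=1) > 0 for z = 0, 1. Then E[Y₀ | cl] is identified from the observed (non-missing) data by: E[Y₀ | cl] = [ P(D=0 | Z=0)·E[S | Z=0, D=0, Δ_S=1]·E[Y | Z=0, D=0, S=1, Δ_Y=1] − P(D=0 | Z=1)·E[S | Z=1, D=0, Δ_S=1]·E[Y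 | Z=1, D=0, S=1, Δ_Y=1] ] / [ P(D=0 | Z=0)·E[S | Z=0, D=0, Δ_S=1] − P(D=0 | Z=1)·E[S | Z=1, D=0, Δ_S=1] ], and the denominator is strictly positive. -/
open MeasureTheory ProbabilityTheory

variable {Ω : Type*} [MeasurableSpace Ω]

private lemma aux_int01 (P : Measure Ω) [IsFiniteMeasure P]
    {f : Ω → ℝ} (hf : Measurable f) (hb : ∀ ω, f ω = 0 ∨ f ω = 1)
    {E : Set Ω} (hE : MeasurableSet E) :
    ∫ ω in E, f ω ∂P = (P (E ∩ {ω | f ω = 1})).toReal := by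
  have h1 : MeasurableSet {ω | f ω = 1} := hf (measurableSet_singleton 1)
  have heq : ∀ ω, f ω = Set.indicator {ω | f ω = 1} (fun _ => (1:ℝ)) ω := by
    intro ω
    rcases hb ω with h | h <;> simp [Set.indicator_apply, h]
  calc ∫ ω in E, f ω ∂P
      = ∫ ω in E, Set.indicator {ω | f ω = 1} (fun _ => (1:ℝ)) ω ∂P :=
        setIntegral_congr_fun hE fun ω _ => heq ω
    _ = ∫ _ω in E ∩ {ω | f ω = 1}, (1:ℝ) ∂P := setIntegral_indicator h1
    _ = (P (E ∩ {ω | f ω = 1})).toReal := by rw [setIntegral_const]; simp; rfl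

private lemma aux_filter (P : Measure Ω) {Δ : Ω → ℝ} (hΔ : Measurable Δ)
    (hb : ∀ ω, Δ ω = 0 ∨ Δ ω = 1) {E : Set Ω} (hE : MeasurableSet E) (X : Ω → ℝ) :
    ∫ ω in E ∩ {ω | Δ ω = 1}, X ω ∂P = ∫ ω in E, X ω * Δ ω ∂P := by
  have h1 : MeasurableSet {ω | Δ ω = 1} := hΔ (measurableSet_singleton 1)
  rw [← setIntegral_indicator h1]
  refine setIntegral_congr_fun hE fun ω _ => ?_
  rcases hb ω with h | h <;> simp [Set.indicator_apply, h]

private lemma aux_indep_meas {β : Type*} [MeasurableSpace β]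
    (P : Measure Ω) {Z : Ω → ℝ} {W : Ω → β}
    (hindep : IndepFun Z W P) (z : ℝ) {B : Set β} (hB : MeasurableSet B) :
    (P ({ω | Z ω = z} ∩ W ⁻¹' B)).toReal
      = (P {ω | Z ω = z}).toReal * (P (W ⁻¹' B)).toReal := by
  have h := hindep.measure_inter_preimage_eq_mul {z} B (measurableSet_singleton z) hB
  have hzz : Z ⁻¹' ({z} : Set ℝ) = {ω | Z ω = z} := rfl
  rw [hzz] at h
  rw [h, ENNReal.toReal_mul]

private lemma aux_indep_int {β : Type*} [MeasurableSpace β]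
    (P : Measure Ω) [IsProbabilityMeasure P] {Z : Ω → ℝ} {W : Ω → β}
    (hindep : IndepFun Z W P) (z : ℝ) {B : Set β} (hB : MeasurableSet B)
    (hZm : Measurable Z) (hWB : MeasurableSet (W ⁻¹' B))
    {π : β → ℝ} (hπ : Measurable π) (hint : Integrable (fun ω => π (W ω)) P) :
    ∫ ω in {ω | Z ω = z} ∩ W ⁻¹' B, π (W ω) ∂P
      = (P {ω | Z ω = z}).toReal * ∫ ω in W ⁻¹' B, π (W ω) ∂P := by
  have hZset : MeasurableSet {ω | Z ω = z} := hZm (measurableSet_singleton z)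
  have hIf : IndepFun (fun ω => Set.indicator ({z} : Set ℝ) (fun _ => (1:ℝ)) (Z ω))
      (fun ω => Set.indicator B π (W ω)) P :=
    hindep.comp (measurable_const.indicator (measurableSet_singleton z)) (hπ.indicator hB)
  have hf' : (fun ω => Set.indicator ({z} : Set ℝ) (fun _ => (1:ℝ)) (Z ω))
      = Set.indicator {ω | Z ω = z} (fun _ => (1:ℝ)) := by
    funext ω; by_cases h : Z ω = z <;> simp [Set.indicator_apply, h]
  have hg' : (fun ω => Set.indicator B π (W ω))
      = Set.indicator (W ⁻¹' B) (fun ω => π (W ω)) := by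
    funext ω; by_cases h : W ω ∈ B <;> simp [Set.indicator_apply, Set.mem_preimage, h]
  have hfint : Integrable (fun ω => Set.indicator ({z} : Set ℝ) (fun _ => (1:ℝ)) (Z ω)) P := by
    rw [hf']; exact (integrable_const 1).indicator hZset
  have hgint : Integrable (fun ω => Set.indicator B π (W ω)) P := by
    rw [hg']; exact hint.indicator hWB
  have hmul := hIf.integral_mul_eq_mul_integral hfint.aestronglyMeasurable hgint.aestronglyMeasurable
  have hfg : ((fun ω => Set.indicator ({z} : Set ℝ) (fun _ => (1:ℝ)) (Z ω))
        * (fun ω => Set.indicator B π (W ω)))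
      = Set.indicator ({ω | Z ω = z} ∩ W ⁻¹' B) (fun ω => π (W ω)) := by
    funext ω
    by_cases h1 : Z ω = z <;> by_cases h2 : W ω ∈ B <;>
      simp [Set.indicator_apply, Set.mem_preimage, Set.mem_inter_iff, h1, h2]
  rw [hfg] at hmul
  rw [integral_indicator (hZset.inter hWB)] at hmul
  rw [hf'] at hmul
  rw [hg'] at hmul
  rw [integral_indicator hZset, integral_indicator hWB, setIntegral_const] at hmul
  simpa [Measure.real] using hmul

private lemma aux_H (a p n q t : ℝ) (ha : a ≠ 0) (hp : p ≠ 0) (hq : q ≠ 0)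
    (h : t / (a * p) = (q / (a * p)) * ((a * n) / (a * p))) :
    (a * p) / a * (t / q) = n := by
  field_simp at h ⊢
  have ha2 : a * a * p ≠ 0 := mul_ne_zero (mul_ne_zero ha ha) hp
  have h' : (t * p) * (a * a * p) = (q * n) * (a * a * p) := by rw [h]
  exact mul_right_cancel₀ ha2 h'

private lemma aux_G (a pns iN yd g : ℝ) (ha : a ≠ 0) (hpns : pns ≠ 0) (hg : g ≠ 0)
    (h : yd / (a * pns) = ((a * iN) / (a * pns)) * (g / (a * pns))) :
    yd / g = iN / pns := by
  field_simp at h ⊢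
  have ha2 : a * a * pns ≠ 0 := mul_ne_zero (mul_ne_zero ha ha) hpns
  have h' : (yd * pns) * (a * a * pns) = (iN * g) * (a * a * pns) := by rw [h]
  exact mul_right_cancel₀ ha2 h'

private lemma aux_alg (x y i j e : ℝ) (hx : 0 < x) (hy : 0 < y) (he : j = y * e) :
    e = ((x + y) * ((i + j) / (x + y)) - x * (i / x)) / ((x + y) - x) := by
  have hxy : x + y ≠ 0 := by positivity
  rw [he]
  field_simp
  rw [show i + e * y - i = e * y by ring, show x + y - x = y by ring, mul_div_assoc, div_self hy.ne', mul_one]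

private lemma aux_pos (a p : ℝ) (ha : 0 < a) (h : 0 < a * p) : 0 < p := by nlinarith


set_option maxHeartbeats 1000000 in
/-- Theorem 1 with missing data, control-arm part: Under randomization, monotonicity, relevance, principal ignorability and MAR in the cells `(1,0)` and `(0,0)`, `E[Y₀ | cl]` is identified from the observed data as a ratio of differences of `P(D=0|Z=z)·E[S|Z=z,D=0,Δ_S=1]·E[Y|Z=z,D=0,S=1,Δ_Y=1]` terms, and the denominator is strictly positive. -/
theorem stmt_17
    (P : Measure Ω) [IsProbabilityMeasure P]
    (Z D0 D1 S0 S1 Y0 Y1 D S Y : Ω → ℝ)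
    (hZm : Measurable Z) (hD0m : Measurable D0) (hD1m : Measurable D1)
    (hS0m : Measurable S0) (hS1m : Measurable S1)
    (hY0i : Integrable Y0 P) (hY1i : Integrable Y1 P)
    (hZb : ∀ ω, Z ω = 0 ∨ Z ω = 1)
    (hD0b : ∀ ω, D0 ω = 0 ∨ D0 ω = 1)
    (hD1b : ∀ ω, D1 ω = 0 ∨ D1 ω = 1)
    (hS0b : ∀ ω, S0 ω = 0 ∨ S0 ω = 1)
    (hS1b : ∀ ω, S1 ω = 0 ∨ S1 ω = 1)
    (hD : ∀ ω, D ω = Z ω * D1 ω + (1 - Z ω) * D0 ω)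
    (hS : ∀ ω, S ω = D ω * S1 ω + (1 - D ω) * S0 ω)
    (hY : ∀ ω, Y ω = D ω * Y1 ω + (1 - D ω) * Y0 ω)
    (hindep : IndepFun Z (fun ω => (D0 ω, D1 ω, S0 ω, S1 ω, Y0 ω, Y1 ω)) P)
    (hZpos : 0 < (P {ω | Z ω = 1}).toReal)
    (hZlt1 : (P {ω | Z ω = 1}).toReal < 1)
    (hmono : ∀ᵐ ω ∂P, D0 ω ≤ D1 ω)
    (hrel : ∫ ω, D1 ω ∂P ≠ ∫ ω, D0 ω ∂P)
    (hclpos : 0 < (P {ω | D1 ω = 1 ∧ D0 ω = 0 ∧ S1 ω = 1 ∧ S0 ω = 1}).toReal)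
    (hcppos : 0 < (P {ω | D1 ω = 1 ∧ D0 ω = 0 ∧ S1 ω = 1 ∧ S0 ω = 0}).toReal)
    (hchpos : 0 < (P {ω | D1 ω = 1 ∧ D0 ω = 0 ∧ S1 ω = 0 ∧ S0 ω = 1}).toReal)
    (hPI1 : cexp P {ω | D1 ω = 1 ∧ D0 ω = 0 ∧ S1 ω = 1 ∧ S0 ω = 1} Y1
      = cexp P {ω | D1 ω = 1 ∧ D0 ω = 0 ∧ S1 ω = 1 ∧ S0 ω = 0} Y1)
    (hPI0 : cexp P {ω | D1 ω = 1 ∧ D0 ω = 0 ∧ S1 ω = 1 ∧ S0 ω = 1} Y0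
      = cexp P {ω | D1 ω = 1 ∧ D0 ω = 0 ∧ S1 ω = 0 ∧ S0 ω = 1} Y0)
    (hcS0pos : 0 < (P ({ω | D1 ω = 1 ∧ D0 ω = 0} ∩ {ω | S0 ω = 1})).toReal)
    (ΔS ΔY : Ω → ℝ)
    (hΔSm : Measurable ΔS) (hΔYm : Measurable ΔY)
    (hΔSb : ∀ ω, ΔS ω = 0 ∨ ΔS ω = 1)
    (hΔYb : ∀ ω, ΔY ω = 0 ∨ ΔY ω = 1)
    (hMARS10 : cprob P {ω | Z ω = 1 ∧ D ω = 0} {ω | ΔS ω = 1 ∧ S ω = 1}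
      = cprob P {ω | Z ω = 1 ∧ D ω = 0} {ω | ΔS ω = 1} * cprob P {ω | Z ω = 1 ∧ D ω = 0} {ω | S ω = 1})
    (hMARY10 : 0 < (P {ω | Z ω = 1 ∧ D ω = 0 ∧ S ω = 1}).toReal →
      cexp P {ω | Z ω = 1 ∧ D ω = 0 ∧ S ω = 1} (fun ω => Y ω * ΔY ω)
        = cexp P {ω | Z ω = 1 ∧ D ω = 0 ∧ S ω = 1} Y * cexp P {ω | Z ω = 1 ∧ D ω = 0 ∧ S ω = 1} ΔY)
    (hΔSpos10 : 0 < (P {ω | Z ω = 1 ∧ D ω = 0 ∧ ΔS ω = 1}).toReal)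
    (hΔYpos10 : 0 < (P {ω | Z ω = 1 ∧ D ω = 0 ∧ S ω = 1 ∧ ΔY ω = 1}).toReal)
    (hMARS00 : cprob P {ω | Z ω = 0 ∧ D ω = 0} {ω | ΔS ω = 1 ∧ S ω = 1}
      = cprob P {ω | Z ω = 0 ∧ D ω = 0} {ω | ΔS ω = 1} * cprob P {ω | Z ω = 0 ∧ D ω = 0} {ω | S ω = 1})
    (hMARY00 : 0 < (P {ω | Z ω = 0 ∧ D ω = 0 ∧ S ω = 1}).toReal →
      cexp P {ω | Z ω = 0 ∧ D ω = 0 ∧ S ω = 1} (fun ω => Y ω * ΔY ω)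
        = cexp P {ω | Z ω = 0 ∧ D ω = 0 ∧ S ω = 1} Y * cexp P {ω | Z ω = 0 ∧ D ω = 0 ∧ S ω = 1} ΔY)
    (hΔSpos00 : 0 < (P {ω | Z ω = 0 ∧ D ω = 0 ∧ ΔS ω = 1}).toReal)
    (hΔYpos00 : 0 < (P {ω | Z ω = 0 ∧ D ω = 0 ∧ S ω = 1 ∧ ΔY ω = 1}).toReal)
    :
    0 < cprob P {ω | Z ω = 0} {ω | D ω = 0}
          * cexp P {ω | Z ω = 0 ∧ D ω = 0 ∧ ΔS ω = 1} S
        - cprob P {ω | Z ω = 1} {ω | D ω = 0}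
          * cexp P {ω | Z ω = 1 ∧ D ω = 0 ∧ ΔS ω = 1} S ∧
    cexp P {ω | D1 ω = 1 ∧ D0 ω = 0 ∧ S1 ω = 1 ∧ S0 ω = 1} Y0
      = (cprob P {ω | Z ω = 0} {ω | D ω = 0}
          * cexp P {ω | Z ω = 0 ∧ D ω = 0 ∧ ΔS ω = 1} S
          * cexp P {ω | Z ω = 0 ∧ D ω = 0 ∧ S ω = 1 ∧ ΔY ω = 1} Y
        - cprob P {ω | Z ω = 1} {ω | D ω = 0}
          * cexp P {ω | Z ω = 1 ∧ D ω = 0 ∧ ΔS ω = 1} S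
          * cexp P {ω | Z ω = 1 ∧ D ω = 0 ∧ S ω = 1 ∧ ΔY ω = 1} Y)
        / (cprob P {ω | Z ω = 0} {ω | D ω = 0}
          * cexp P {ω | Z ω = 0 ∧ D ω = 0 ∧ ΔS ω = 1} S
        - cprob P {ω | Z ω = 1} {ω | D ω = 0}
          * cexp P {ω | Z ω = 1 ∧ D ω = 0 ∧ ΔS ω = 1} S) := by
  classical
  -- pointwise consequences of the structural equations
  have hDZ1 : ∀ ω, Z ω = 1 → D ω = D1 ω := fun ω hz => by rw [hD ω, hz]; ring
  have hDZ0 : ∀ ω, Z ω = 0 → D ω = D0 ω := fun ω hz => by rw [hD ω, hz]; ring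
  have hSD0 : ∀ ω, D ω = 0 → S ω = S0 ω := fun ω hd => by rw [hS ω, hd]; ring
  have hYD0 : ∀ ω, D ω = 0 → Y ω = Y0 ω := fun ω hd => by rw [hY ω, hd]; ring
  have hDm : Measurable D := by
    have h : D = fun ω => Z ω * D1 ω + (1 - Z ω) * D0 ω := funext hD
    rw [h]; exact (hZm.mul hD1m).add ((measurable_const.sub hZm).mul hD0m)
  have hSm : Measurable S := by
    have h : S = fun ω => D ω * S1 ω + (1 - D ω) * S0 ω := funext hS
    rw [h]; exact (hDm.mul hS1m).add ((measurable_const.sub hDm).mul hS0m)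
  have hDb : ∀ ω, D ω = 0 ∨ D ω = 1 := by
    intro ω
    rcases hZb ω with h | h
    · rcases hD0b ω with h0 | h0
      · left; rw [hD ω, h, h0]; ring
      · right; rw [hD ω, h, h0]; ring
    · rcases hD1b ω with h1 | h1
      · left; rw [hD ω, h, h1]; ring
      · right; rw [hD ω, h, h1]; ring
  have hSb : ∀ ω, S ω = 0 ∨ S ω = 1 := by
    intro ω
    rcases hDb ω with h | h
    · rcases hS0b ω with h0 | h0
      · left; rw [hS ω, h, h0]; ring
      · right; rw [hS ω, h, h0]; ring
    · rcases hS1b ω with h1 | h1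
      · left; rw [hS ω, h, h1]; ring
      · right; rw [hS ω, h, h1]; ring
  set W : Ω → ℝ × ℝ × ℝ × ℝ × ℝ × ℝ := fun ω => (D0 ω, D1 ω, S0 ω, S1 ω, Y0 ω, Y1 ω) with hW
  set B_N : Set (ℝ × ℝ × ℝ × ℝ × ℝ × ℝ) := {w | w.2.1 = 0} with hB_Ndef
  set B_C : Set (ℝ × ℝ × ℝ × ℝ × ℝ × ℝ) := {w | w.1 = 0} with hB_Cdef
  set B_NS : Set (ℝ × ℝ × ℝ × ℝ × ℝ × ℝ) := {w | w.2.1 = 0 ∧ w.2.2.1 = 1} with hB_NSdef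
  set B_CS : Set (ℝ × ℝ × ℝ × ℝ × ℝ × ℝ) := {w | w.1 = 0 ∧ w.2.2.1 = 1} with hB_CSdef
  have m1 : Measurable (fun w : ℝ × ℝ × ℝ × ℝ × ℝ × ℝ => w.1) := measurable_fst
  have m21 : Measurable (fun w : ℝ × ℝ × ℝ × ℝ × ℝ × ℝ => w.2.1) :=
    measurable_fst.comp measurable_snd
  have m221 : Measurable (fun w : ℝ × ℝ × ℝ × ℝ × ℝ × ℝ => w.2.2.1) :=
    measurable_fst.comp (measurable_snd.comp measurable_snd)
  have mY : Measurable (fun w : ℝ × ℝ × ℝ × ℝ × ℝ × ℝ => w.2.2.2.2.1) :=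
    measurable_fst.comp (measurable_snd.comp (measurable_snd.comp (measurable_snd.comp
      measurable_snd)))
  have hB_N : MeasurableSet B_N := m21 (measurableSet_singleton 0)
  have hB_C : MeasurableSet B_C := m1 (measurableSet_singleton 0)
  have hB_NS : MeasurableSet B_NS :=
    (m21 (measurableSet_singleton 0)).inter (m221 (measurableSet_singleton 1))
  have hB_CS : MeasurableSet B_CS :=
    (m1 (measurableSet_singleton 0)).inter (m221 (measurableSet_singleton 1))
  have hWNS : MeasurableSet (W ⁻¹' B_NS) :=
    (hD1m (measurableSet_singleton 0)).inter (hS0m (measurableSet_singleton 1))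
  have hWCS : MeasurableSet (W ⁻¹' B_CS) :=
    (hD0m (measurableSet_singleton 0)).inter (hS0m (measurableSet_singleton 1))
  -- set identities
  have eE1 : {ω | Z ω = 1 ∧ D ω = 0} = {ω | Z ω = 1} ∩ W ⁻¹' B_N :=
    Set.ext fun ω => and_congr_right fun hz => by rw [hDZ1 ω hz]; exact Iff.rfl
  have eE0 : {ω | Z ω = 0 ∧ D ω = 0} = {ω | Z ω = 0} ∩ W ⁻¹' B_C :=
    Set.ext fun ω => and_congr_right fun hz => by rw [hDZ0 ω hz]; exact Iff.rfl
  have eD1 : {ω | D ω = 0} ∩ {ω | Z ω = 1} = {ω | Z ω = 1} ∩ W ⁻¹' B_N := by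
    ext ω
    constructor
    · rintro ⟨hd, hz⟩; exact ⟨hz, show D1 ω = 0 by rw [← hDZ1 ω hz]; exact hd⟩
    · rintro ⟨hz, hd⟩; exact ⟨show D ω = 0 by rw [hDZ1 ω hz]; exact hd, hz⟩
  have eD0 : {ω | D ω = 0} ∩ {ω | Z ω = 0} = {ω | Z ω = 0} ∩ W ⁻¹' B_C := by
    ext ω
    constructor
    · rintro ⟨hd, hz⟩; exact ⟨hz, show D0 ω = 0 by rw [← hDZ0 ω hz]; exact hd⟩
    · rintro ⟨hz, hd⟩; exact ⟨show D ω = 0 by rw [hDZ0 ω hz]; exact hd, hz⟩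
  have eF1 : {ω | Z ω = 1 ∧ D ω = 0 ∧ S ω = 1} = {ω | Z ω = 1} ∩ W ⁻¹' B_NS := by
    ext ω
    constructor
    · rintro ⟨hz, hd, hs⟩
      refine ⟨hz, show D1 ω = 0 ∧ S0 ω = 1 from ?_⟩
      exact ⟨by rw [← hDZ1 ω hz]; exact hd, by rw [← hSD0 ω hd]; exact hs⟩
    · rintro ⟨hz, hd, hs⟩
      have hd' : D ω = 0 := by rw [hDZ1 ω hz]; exact hd
      exact ⟨hz, hd', by rw [hSD0 ω hd']; exact hs⟩
  have eF0 : {ω | Z ω = 0 ∧ D ω = 0 ∧ S ω = 1} = {ω | Z ω = 0} ∩ W ⁻¹' B_CS := by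
    ext ω
    constructor
    · rintro ⟨hz, hd, hs⟩
      refine ⟨hz, show D0 ω = 0 ∧ S0 ω = 1 from ?_⟩
      exact ⟨by rw [← hDZ0 ω hz]; exact hd, by rw [← hSD0 ω hd]; exact hs⟩
    · rintro ⟨hz, hd, hs⟩
      have hd' : D ω = 0 := by rw [hDZ0 ω hz]; exact hd
      exact ⟨hz, hd', by rw [hSD0 ω hd']; exact hs⟩
  have eS1E1 : {ω | S ω = 1} ∩ {ω | Z ω = 1 ∧ D ω = 0} = {ω | Z ω = 1} ∩ W ⁻¹' B_NS := by
    rw [← eF1]; ext ω; simp only [Set.mem_inter_iff, Set.mem_setOf_eq]; tauto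
  have eS1E0 : {ω | S ω = 1} ∩ {ω | Z ω = 0 ∧ D ω = 0} = {ω | Z ω = 0} ∩ W ⁻¹' B_CS := by
    rw [← eF0]; ext ω; simp only [Set.mem_inter_iff, Set.mem_setOf_eq]; tauto
  have eQ1 : {ω | ΔS ω = 1} ∩ {ω | Z ω = 1 ∧ D ω = 0} = {ω | Z ω = 1 ∧ D ω = 0 ∧ ΔS ω = 1} := by
    ext ω; simp only [Set.mem_inter_iff, Set.mem_setOf_eq]; tauto
  have eQ0 : {ω | ΔS ω = 1} ∩ {ω | Z ω = 0 ∧ D ω = 0} = {ω | Z ω = 0 ∧ D ω = 0 ∧ ΔS ω = 1} := by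
    ext ω; simp only [Set.mem_inter_iff, Set.mem_setOf_eq]; tauto
  have eT1 : {ω | ΔS ω = 1 ∧ S ω = 1} ∩ {ω | Z ω = 1 ∧ D ω = 0}
      = {ω | Z ω = 1 ∧ D ω = 0 ∧ ΔS ω = 1} ∩ {ω | S ω = 1} := by
    ext ω; simp only [Set.mem_inter_iff, Set.mem_setOf_eq]; tauto
  have eT0 : {ω | ΔS ω = 1 ∧ S ω = 1} ∩ {ω | Z ω = 0 ∧ D ω = 0}
      = {ω | Z ω = 0 ∧ D ω = 0 ∧ ΔS ω = 1} ∩ {ω | S ω = 1} := by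
    ext ω; simp only [Set.mem_inter_iff, Set.mem_setOf_eq]; tauto
  have eG1 : {ω | Z ω = 1 ∧ D ω = 0 ∧ S ω = 1 ∧ ΔY ω = 1}
      = {ω | Z ω = 1 ∧ D ω = 0 ∧ S ω = 1} ∩ {ω | ΔY ω = 1} := by
    ext ω; simp only [Set.mem_inter_iff, Set.mem_setOf_eq]; tauto
  have eG0 : {ω | Z ω = 0 ∧ D ω = 0 ∧ S ω = 1 ∧ ΔY ω = 1}
      = {ω | Z ω = 0 ∧ D ω = 0 ∧ S ω = 1} ∩ {ω | ΔY ω = 1} := by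
    ext ω; simp only [Set.mem_inter_iff, Set.mem_setOf_eq]; tauto
  -- monotonicity: a.e. split of the control-arm survivors
  set cS : Set Ω := {ω | D1 ω = 1 ∧ D0 ω = 0} ∩ {ω | S0 ω = 1} with hcSdef
  have hbad : P {ω | ¬ D0 ω ≤ D1 ω} = 0 := ae_iff.1 hmono
  have hCae : (W ⁻¹' B_CS : Set Ω) =ᵐ[P] ((W ⁻¹' B_NS ∪ cS : Set Ω)) := by
    rw [MeasureTheory.ae_eq_set]
    constructor
    · have hsub : (W ⁻¹' B_CS : Set Ω) ⊆ W ⁻¹' B_NS ∪ cS := by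
        rintro ω ⟨hd0, hs0⟩
        rcases hD1b ω with h1 | h1
        · exact Or.inl ⟨h1, hs0⟩
        · exact Or.inr ⟨⟨h1, hd0⟩, hs0⟩
      rw [Set.diff_eq_empty.2 hsub]; exact measure_empty
    · refine measure_mono_null ?_ hbad
      rintro ω ⟨hmem, hnot⟩
      rcases hmem with ⟨h1, hs0⟩ | ⟨⟨h1, h0⟩, hs0⟩
      · rcases hD0b ω with h0 | h0
        · exact absurd (show ω ∈ (W ⁻¹' B_CS : Set Ω) from ⟨h0, hs0⟩) hnot
        · show ¬ D0 ω ≤ D1 ω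
          have h1' : D1 ω = 0 := h1
          rw [h0, h1']; norm_num
      · exact absurd (show ω ∈ (W ⁻¹' B_CS : Set Ω) from ⟨h0, hs0⟩) hnot
  have ecS : cS = {ω | D1 ω = 1 ∧ D0 ω = 0 ∧ S1 ω = 1 ∧ S0 ω = 1}
      ∪ {ω | D1 ω = 1 ∧ D0 ω = 0 ∧ S1 ω = 0 ∧ S0 ω = 1} := by
    ext ω
    constructor
    · rintro ⟨⟨h1, h0⟩, hs0⟩
      rcases hS1b ω with h | h
      · exact Or.inr ⟨h1, h0, h, hs0⟩
      · exact Or.inl ⟨h1, h0, h, hs0⟩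
    · rintro (⟨h1, h0, _, hs0⟩ | ⟨h1, h0, _, hs0⟩) <;> exact ⟨⟨h1, h0⟩, hs0⟩
  have hdisjc : Disjoint {ω | D1 ω = 1 ∧ D0 ω = 0 ∧ S1 ω = 1 ∧ S0 ω = 1}
      {ω | D1 ω = 1 ∧ D0 ω = 0 ∧ S1 ω = 0 ∧ S0 ω = 1} := by
    rw [Set.disjoint_left]
    rintro ω ⟨_, _, h1, _⟩ ⟨_, _, h0, _⟩
    rw [h1] at h0; exact one_ne_zero h0
  have hdisjNS : Disjoint (W ⁻¹' B_NS : Set Ω) cS := by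
    rw [Set.disjoint_left]
    rintro ω ⟨h0, _⟩ ⟨⟨h1, _⟩, _⟩
    rw [show (W ω).2.1 = D1 ω from rfl] at h0
    rw [h0] at h1; exact zero_ne_one h1
  have hmscS : MeasurableSet cS :=
    ((hD1m (measurableSet_singleton 1)).inter (hD0m (measurableSet_singleton 0))).inter
      (hS0m (measurableSet_singleton 1))
  have hmsch : MeasurableSet {ω | D1 ω = 1 ∧ D0 ω = 0 ∧ S1 ω = 0 ∧ S0 ω = 1} :=
    (hD1m (measurableSet_singleton 1)).inter ((hD0m (measurableSet_singleton 0)).inter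
      ((hS1m (measurableSet_singleton 0)).inter (hS0m (measurableSet_singleton 1))))
  -- measure arithmetic
  have hmonoTR : ∀ {A B : Set Ω}, A ⊆ B → (P A).toReal ≤ (P B).toReal :=
    fun h => ENNReal.toReal_mono (measure_ne_top P _) (measure_mono h)
  have ha1ne : (P {ω | Z ω = 1}).toReal ≠ 0 := ne_of_gt hZpos
  have hZ0pos : 0 < (P {ω | Z ω = 0}).toReal :=
    lt_of_lt_of_le hΔSpos00 (hmonoTR fun ω h => h.1)
  have ha0ne : (P {ω | Z ω = 0}).toReal ≠ 0 := ne_of_gt hZ0pos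
  have pE1eq : (P {ω | Z ω = 1 ∧ D ω = 0}).toReal
      = (P {ω | Z ω = 1}).toReal * (P (W ⁻¹' B_N)).toReal := by
    rw [eE1, aux_indep_meas P hindep 1 hB_N]
  have pE0eq : (P {ω | Z ω = 0 ∧ D ω = 0}).toReal
      = (P {ω | Z ω = 0}).toReal * (P (W ⁻¹' B_C)).toReal := by
    rw [eE0, aux_indep_meas P hindep 0 hB_C]
  have pE1pos : 0 < (P {ω | Z ω = 1 ∧ D ω = 0}).toReal :=
    lt_of_lt_of_le hΔSpos10 (hmonoTR fun ω h => ⟨h.1, h.2.1⟩)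
  have pE0pos : 0 < (P {ω | Z ω = 0 ∧ D ω = 0}).toReal :=
    lt_of_lt_of_le hΔSpos00 (hmonoTR fun ω h => ⟨h.1, h.2.1⟩)
  have pNpos : 0 < (P (W ⁻¹' B_N)).toReal := by
    refine aux_pos (P {ω | Z ω = 1}).toReal _ hZpos ?_
    rw [← pE1eq]; exact pE1pos
  have pCpos : 0 < (P (W ⁻¹' B_C)).toReal := by
    refine aux_pos (P {ω | Z ω = 0}).toReal _ hZ0pos ?_
    rw [← pE0eq]; exact pE0pos
  have pF1pos : 0 < (P {ω | Z ω = 1 ∧ D ω = 0 ∧ S ω = 1}).toReal :=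
    lt_of_lt_of_le hΔYpos10 (hmonoTR fun ω h => ⟨h.1, h.2.1, h.2.2.1⟩)
  have pF0pos : 0 < (P {ω | Z ω = 0 ∧ D ω = 0 ∧ S ω = 1}).toReal :=
    lt_of_lt_of_le hΔYpos00 (hmonoTR fun ω h => ⟨h.1, h.2.1, h.2.2.1⟩)
  have pF1eq : (P {ω | Z ω = 1 ∧ D ω = 0 ∧ S ω = 1}).toReal
      = (P {ω | Z ω = 1}).toReal * (P (W ⁻¹' B_NS)).toReal := by
    rw [eF1, aux_indep_meas P hindep 1 hB_NS]
  have pF0eq : (P {ω | Z ω = 0 ∧ D ω = 0 ∧ S ω = 1}).toReal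
      = (P {ω | Z ω = 0}).toReal * (P (W ⁻¹' B_CS)).toReal := by
    rw [eF0, aux_indep_meas P hindep 0 hB_CS]
  have pNSpos : 0 < (P (W ⁻¹' B_NS)).toReal := by
    refine aux_pos (P {ω | Z ω = 1}).toReal _ hZpos ?_
    rw [← pF1eq]; exact pF1pos
  have pCSpos : 0 < (P (W ⁻¹' B_CS)).toReal := by
    refine aux_pos (P {ω | Z ω = 0}).toReal _ hZ0pos ?_
    rw [← pF0eq]; exact pF0pos
  -- measurable sets in Ω
  have hmsQ1 : MeasurableSet {ω | Z ω = 1 ∧ D ω = 0 ∧ ΔS ω = 1} :=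
    (hZm (measurableSet_singleton 1)).inter ((hDm (measurableSet_singleton 0)).inter
      (hΔSm (measurableSet_singleton 1)))
  have hmsQ0 : MeasurableSet {ω | Z ω = 0 ∧ D ω = 0 ∧ ΔS ω = 1} :=
    (hZm (measurableSet_singleton 0)).inter ((hDm (measurableSet_singleton 0)).inter
      (hΔSm (measurableSet_singleton 1)))
  have hmsF1 : MeasurableSet {ω | Z ω = 1 ∧ D ω = 0 ∧ S ω = 1} :=
    (hZm (measurableSet_singleton 1)).inter ((hDm (measurableSet_singleton 0)).inter
      (hSm (measurableSet_singleton 1)))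
  have hmsF0 : MeasurableSet {ω | Z ω = 0 ∧ D ω = 0 ∧ S ω = 1} :=
    (hZm (measurableSet_singleton 0)).inter ((hDm (measurableSet_singleton 0)).inter
      (hSm (measurableSet_singleton 1)))
  -- the two observed cell identities (numerator of the weighting)
  have H1 : cprob P {ω | Z ω = 1} {ω | D ω = 0}
      * cexp P {ω | Z ω = 1 ∧ D ω = 0 ∧ ΔS ω = 1} S = (P (W ⁻¹' B_NS)).toReal := by
    have h := hMARS10
    rw [cprob, cprob, cprob, eQ1, eT1, eS1E1, eE1,
      aux_indep_meas P hindep 1 hB_N, aux_indep_meas P hindep 1 hB_NS] at h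
    rw [cprob, cexp, aux_int01 P hSm hSb hmsQ1, eD1, aux_indep_meas P hindep 1 hB_N]
    exact aux_H _ _ _ _ _ ha1ne (ne_of_gt pNpos) (ne_of_gt hΔSpos10) h
  have H0 : cprob P {ω | Z ω = 0} {ω | D ω = 0}
      * cexp P {ω | Z ω = 0 ∧ D ω = 0 ∧ ΔS ω = 1} S = (P (W ⁻¹' B_CS)).toReal := by
    have h := hMARS00
    rw [cprob, cprob, cprob, eQ0, eT0, eS1E0, eE0,
      aux_indep_meas P hindep 0 hB_C, aux_indep_meas P hindep 0 hB_CS] at h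
    rw [cprob, cexp, aux_int01 P hSm hSb hmsQ0, eD0, aux_indep_meas P hindep 0 hB_C]
    exact aux_H _ _ _ _ _ ha0ne (ne_of_gt pCpos) (ne_of_gt hΔSpos00) h
  -- outcome identities
  have hIYF1 : ∫ ω in {ω | Z ω = 1 ∧ D ω = 0 ∧ S ω = 1}, Y ω ∂P
      = (P {ω | Z ω = 1}).toReal * ∫ ω in W ⁻¹' B_NS, Y0 ω ∂P := by
    have h1 : ∫ ω in {ω | Z ω = 1 ∧ D ω = 0 ∧ S ω = 1}, Y ω ∂P
        = ∫ ω in {ω | Z ω = 1 ∧ D ω = 0 ∧ S ω = 1}, Y0 ω ∂P :=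
      setIntegral_congr_fun hmsF1 fun ω hω => hYD0 ω hω.2.1
    rw [h1, eF1]
    exact aux_indep_int P hindep 1 hB_NS hZm hWNS mY hY0i
  have hIYF0 : ∫ ω in {ω | Z ω = 0 ∧ D ω = 0 ∧ S ω = 1}, Y ω ∂P
      = (P {ω | Z ω = 0}).toReal * ∫ ω in W ⁻¹' B_CS, Y0 ω ∂P := by
    have h1 : ∫ ω in {ω | Z ω = 0 ∧ D ω = 0 ∧ S ω = 1}, Y ω ∂P
        = ∫ ω in {ω | Z ω = 0 ∧ D ω = 0 ∧ S ω = 1}, Y0 ω ∂P :=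
      setIntegral_congr_fun hmsF0 fun ω hω => hYD0 ω hω.2.1
    rw [h1, eF0]
    exact aux_indep_int P hindep 0 hB_CS hZm hWCS mY hY0i
  have hΔYF1 : ∫ ω in {ω | Z ω = 1 ∧ D ω = 0 ∧ S ω = 1}, ΔY ω ∂P
      = (P {ω | Z ω = 1 ∧ D ω = 0 ∧ S ω = 1 ∧ ΔY ω = 1}).toReal := by
    rw [aux_int01 P hΔYm hΔYb hmsF1, ← eG1]
  have hΔYF0 : ∫ ω in {ω | Z ω = 0 ∧ D ω = 0 ∧ S ω = 1}, ΔY ω ∂P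
      = (P {ω | Z ω = 0 ∧ D ω = 0 ∧ S ω = 1 ∧ ΔY ω = 1}).toReal := by
    rw [aux_int01 P hΔYm hΔYb hmsF0, ← eG0]
  have hYΔ1 : ∫ ω in {ω | Z ω = 1 ∧ D ω = 0 ∧ S ω = 1 ∧ ΔY ω = 1}, Y ω ∂P
      = ∫ ω in {ω | Z ω = 1 ∧ D ω = 0 ∧ S ω = 1}, Y ω * ΔY ω ∂P := by
    rw [eG1]; exact aux_filter P hΔYm hΔYb hmsF1 Y
  have hYΔ0 : ∫ ω in {ω | Z ω = 0 ∧ D ω = 0 ∧ S ω = 1 ∧ ΔY ω = 1}, Y ω ∂P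
      = ∫ ω in {ω | Z ω = 0 ∧ D ω = 0 ∧ S ω = 1}, Y ω * ΔY ω ∂P := by
    rw [eG0]; exact aux_filter P hΔYm hΔYb hmsF0 Y
  have G1 : cexp P {ω | Z ω = 1 ∧ D ω = 0 ∧ S ω = 1 ∧ ΔY ω = 1} Y
      = (∫ ω in W ⁻¹' B_NS, Y0 ω ∂P) / (P (W ⁻¹' B_NS)).toReal := by
    have hMY := hMARY10 pF1pos
    rw [cexp, cexp, cexp, hIYF1, hΔYF1, pF1eq] at hMY
    rw [cexp, hYΔ1]
    exact aux_G _ _ _ _ _ ha1ne (ne_of_gt pNSpos) (ne_of_gt hΔYpos10) hMY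
  have G0 : cexp P {ω | Z ω = 0 ∧ D ω = 0 ∧ S ω = 1 ∧ ΔY ω = 1} Y
      = (∫ ω in W ⁻¹' B_CS, Y0 ω ∂P) / (P (W ⁻¹' B_CS)).toReal := by
    have hMY := hMARY00 pF0pos
    rw [cexp, cexp, cexp, hIYF0, hΔYF0, pF0eq] at hMY
    rw [cexp, hYΔ0]
    exact aux_G _ _ _ _ _ ha0ne (ne_of_gt pCSpos) (ne_of_gt hΔYpos00) hMY
  -- splitting results
  have hCsplit : (P (W ⁻¹' B_CS)).toReal = (P (W ⁻¹' B_NS)).toReal + (P cS).toReal := by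
    rw [measure_congr hCae, measure_union hdisjNS hmscS,
      ENNReal.toReal_add (measure_ne_top P _) (measure_ne_top P _)]
  have hIsplit : ∫ ω in W ⁻¹' B_CS, Y0 ω ∂P
      = (∫ ω in W ⁻¹' B_NS, Y0 ω ∂P) + ∫ ω in cS, Y0 ω ∂P := by
    rw [setIntegral_congr_set hCae,
      setIntegral_union hdisjNS hmscS hY0i.integrableOn hY0i.integrableOn]
  have hclsplit : (P cS).toReal
      = (P {ω | D1 ω = 1 ∧ D0 ω = 0 ∧ S1 ω = 1 ∧ S0 ω = 1}).toReal
        + (P {ω | D1 ω = 1 ∧ D0 ω = 0 ∧ S1 ω = 0 ∧ S0 ω = 1}).toReal := by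
    rw [ecS, measure_union hdisjc hmsch,
      ENNReal.toReal_add (measure_ne_top P _) (measure_ne_top P _)]
  have hIclsplit : ∫ ω in cS, Y0 ω ∂P
      = (∫ ω in {ω | D1 ω = 1 ∧ D0 ω = 0 ∧ S1 ω = 1 ∧ S0 ω = 1}, Y0 ω ∂P)
        + ∫ ω in {ω | D1 ω = 1 ∧ D0 ω = 0 ∧ S1 ω = 0 ∧ S0 ω = 1}, Y0 ω ∂P := by
    rw [ecS]
    exact setIntegral_union hdisjc hmsch hY0i.integrableOn hY0i.integrableOn
  have hFcl : ∫ ω in {ω | D1 ω = 1 ∧ D0 ω = 0 ∧ S1 ω = 1 ∧ S0 ω = 1}, Y0 ω ∂P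
      = (P {ω | D1 ω = 1 ∧ D0 ω = 0 ∧ S1 ω = 1 ∧ S0 ω = 1}).toReal
        * cexp P {ω | D1 ω = 1 ∧ D0 ω = 0 ∧ S1 ω = 1 ∧ S0 ω = 1} Y0 := by
    rw [cexp]; field_simp
  have hFch : ∫ ω in {ω | D1 ω = 1 ∧ D0 ω = 0 ∧ S1 ω = 0 ∧ S0 ω = 1}, Y0 ω ∂P
      = (P {ω | D1 ω = 1 ∧ D0 ω = 0 ∧ S1 ω = 0 ∧ S0 ω = 1}).toReal
        * cexp P {ω | D1 ω = 1 ∧ D0 ω = 0 ∧ S1 ω = 1 ∧ S0 ω = 1} Y0 := by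
    rw [hPI0, cexp]
    have : (P {ω | D1 ω = 1 ∧ D0 ω = 0 ∧ S1 ω = 0 ∧ S0 ω = 1}).toReal ≠ 0 :=
      ne_of_gt hchpos
    field_simp
  have hIcS : ∫ ω in cS, Y0 ω ∂P
      = (P cS).toReal * cexp P {ω | D1 ω = 1 ∧ D0 ω = 0 ∧ S1 ω = 1 ∧ S0 ω = 1} Y0 := by
    rw [hIclsplit, hFcl, hFch, hclsplit]; ring
  have hpcSpos : 0 < (P cS).toReal := hcS0pos
  -- finish
  refine ⟨?_, ?_⟩
  · rw [H1, H0, hCsplit]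
    linarith
  · rw [H1, H0, G1, G0, hCsplit, hIsplit]
    exact aux_alg _ _ _ _ _ pNSpos hpcSpos hIcS
end
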